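/- Let ℓ ≥ 3 be an integer and let G be the cycle graph on Fin N (N = 2ℓ+1). The face F_0 = { f ∈ STAB(G) : f(0) = 0 and Σ_{i ∈ Fin N} f(i) = ℓ } of the stable set polytope has dimension exactly ℓ, i.e., the direction of the affine span of F_0 in ℝ^{Fin N} has dimension ℓ. (Consequently each of the 2ℓ+1 minimal primes of the trace of the canonical module of the Ehrhart ring has coheight ℓ+1.) -/

import Mathlib

/-!
Every edge `{i, i+1}` gives the valid inequality `f i + f (i+1) ≤ 1` on the stable set polytope.
The vertex `0` and the `ℓ` edges `{2k+1, 2k+2}` partition the cycle, so on `F₀` all of these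
inequalities are tight: every direction `g` of `F₀` has `g 0 = 0` and `g (2k+2) = -g (2k+1)`,
hence is determined by its odd coordinates. Conversely, the characteristic vectors of the
stable sets `Sⱼ = {1, 3, …, 2j-1} ∪ {2j+2, 2j+4, …, 2ℓ}` lie in `F₀`, and `χ(Sⱼ₊₁) - χ(Sⱼ)` has
odd coordinates the `j`-th standard basis vector. So restricting to the odd coordinates is a
linear isomorphism from the direction of `F₀` onto `ℝ^ℓ`.
-/

/-- The stable set polytope of the cycle graph on `Fin N` (edges `{i, i+1 mod N}`):
the convex hull of characteristic vectors of stable sets. -/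
def stabPolytope (N : ℕ) [NeZero N] : Set (Fin N → ℝ) :=
  convexHull ℝ
    { f | ∃ S : Finset (Fin N), (∀ i ∈ S, i + 1 ∉ S) ∧
          f = fun i => if i ∈ S then (1 : ℝ) else 0 }

-- A natural number `n` used as an element of `Fin (2 * ℓ + 1)` is read modulo `2 * ℓ + 1`.
open Finset Fin.NatCast

theorem vectorSpan_le_ker_of_forall_eq {R V W : Type*} [Ring R] [AddCommGroup V] [Module R V]
    [AddCommGroup W] [Module R W] {s : Set V} (φ : V →ₗ[R] W) (c : W)
    (h : ∀ x ∈ s, φ x = c) : vectorSpan R s ≤ LinearMap.ker φ := by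
  rw [vectorSpan_def, Submodule.span_le]
  rintro _ ⟨x, hx, y, hy, rfl⟩
  simp [h x hx, h y hy]

theorem Finset.sum_range_two_mul_add_one {M : Type*} [AddCommMonoid M] (g : ℕ → M) (n : ℕ) :
    ∑ i ∈ range (2 * n + 1), g i = g 0 + ∑ k ∈ range n, (g (2 * k + 1) + g (2 * k + 2)) := by
  induction n with
  | zero => simp
  | succ n ih =>
    rw [show 2 * (n + 1) + 1 = 2 * n + 1 + 1 + 1 by ring, sum_range_succ, sum_range_succ, ih,
      sum_range_succ, add_assoc, add_assoc]

theorem Fin.sum_univ_two_mul_add_one {M : Type*} [AddCommMonoid M] {n : ℕ}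
    (f : Fin (2 * n + 1) → M) :
    ∑ i, f i = f 0 + ∑ k ∈ range n, (f (2 * k + 1 : ℕ) + f (2 * k + 2 : ℕ)) := by
  simpa [Fin.cast_val_eq_self] using
    Fin.sum_univ_eq_sum_range (fun i : ℕ => f i) (2 * n + 1) |>.trans
      (sum_range_two_mul_add_one (fun i : ℕ => f i) n)

theorem Fin.eq_zero_or_exists_two_mul_add {n : ℕ} (i : Fin (2 * n + 1)) :
    i = 0 ∨ ∃ k < n, i = (2 * k + 1 : ℕ) ∨ i = (2 * k + 2 : ℕ) := by
  rcases Nat.eq_zero_or_pos i.val with h | h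
  · exact Or.inl (Fin.ext h)
  · refine Or.inr ⟨(i.val - 1) / 2, by omega, ?_⟩
    simp only [Fin.ext_iff,
      Fin.val_cast_of_lt (show 2 * ((i.val - 1) / 2) + 2 < 2 * n + 1 by omega),
      Fin.val_cast_of_lt (show 2 * ((i.val - 1) / 2) + 1 < 2 * n + 1 by omega)]
    omega

theorem add_apply_add_one_le_one_of_mem_stabPolytope {N : ℕ} [NeZero N] {f : Fin N → ℝ}
    (hf : f ∈ stabPolytope N) (i : Fin N) : f i + f (i + 1) ≤ 1 := by
  refine convexHull_min ?_ (convex_halfSpace_le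
    (LinearMap.proj (R := ℝ) (φ := fun _ : Fin N => ℝ) i + LinearMap.proj (i + 1)).isLinear 1) hf
  rintro _ ⟨S, hS, rfl⟩
  by_cases hi : i ∈ S
  · simp [hi, hS i hi]
  · by_cases hi' : i + 1 ∈ S <;> simp [hi, hi']

def stabFaceZero (ℓ : ℕ) : Set (Fin (2 * ℓ + 1) → ℝ) :=
  { f ∈ stabPolytope (2 * ℓ + 1) | f 0 = 0 ∧ ∑ i, f i = (ℓ : ℝ) }

theorem add_eq_one_of_mem_stabFaceZero {ℓ : ℕ} {f : Fin (2 * ℓ + 1) → ℝ}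
    (hf : f ∈ stabFaceZero ℓ) {k : ℕ} (hk : k < ℓ) :
    f (2 * k + 1 : ℕ) + f (2 * k + 2 : ℕ) = 1 := by
  obtain ⟨hf, hf0, hsum⟩ := hf
  have hedge : ∀ k ∈ range ℓ, f (2 * k + 1 : ℕ) + f (2 * k + 2 : ℕ) ≤ 1 := fun k _ => by
    have h := add_apply_add_one_le_one_of_mem_stabPolytope hf (2 * k + 1 : ℕ)
    rwa [← Nat.cast_succ] at h
  have hsum' :
      ∑ k ∈ range ℓ, (f (2 * k + 1 : ℕ) + f (2 * k + 2 : ℕ)) = ∑ k ∈ range ℓ, (1 : ℝ) := by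
    rw [Fin.sum_univ_two_mul_add_one, hf0, zero_add] at hsum
    rw [hsum]
    simp
  exact (sum_eq_sum_iff_of_le hedge).mp hsum' k (mem_range.mpr hk)

def staircaseSet (ℓ j : ℕ) : Finset (Fin (2 * ℓ + 1)) :=
  univ.filter fun i => (i.val % 2 = 1 ∧ i.val < 2 * j) ∨ (i.val % 2 = 0 ∧ 2 * j + 2 ≤ i.val)

def staircase (ℓ j : ℕ) : Fin (2 * ℓ + 1) → ℝ :=
  fun i => if i ∈ staircaseSet ℓ j then 1 else 0

theorem staircaseSet_stable (ℓ j : ℕ) :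
    ∀ i ∈ staircaseSet ℓ j, i + 1 ∉ staircaseSet ℓ j := by
  intro i hi hi'
  simp only [staircaseSet, mem_filter, mem_univ, true_and] at hi hi'
  have hsucc := Fin.val_add_one i
  split_ifs at hsucc with hlast
  · rw [hlast, Fin.val_last] at hi
    omega
  · omega

theorem staircase_mem_stabPolytope (ℓ j : ℕ) : staircase ℓ j ∈ stabPolytope (2 * ℓ + 1) :=
  subset_convexHull ℝ _ ⟨staircaseSet ℓ j, staircaseSet_stable ℓ j, rfl⟩

theorem staircase_zero (ℓ j : ℕ) : staircase ℓ j 0 = 0 := by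
  simp [staircase, staircaseSet]

theorem staircase_odd (ℓ j : ℕ) {k : ℕ} (hk : k < ℓ) :
    staircase ℓ j (2 * k + 1 : ℕ) = if k < j then 1 else 0 := by
  simp only [staircase, staircaseSet, mem_filter, mem_univ, true_and,
    Fin.val_cast_of_lt (show 2 * k + 1 < 2 * ℓ + 1 by omega)]
  congr 1
  simp only [eq_iff_iff]
  omega

theorem staircase_even (ℓ j : ℕ) {k : ℕ} (hk : k < ℓ) :
    staircase ℓ j (2 * k + 2 : ℕ) = if j ≤ k then 1 else 0 := by
  simp only [staircase, staircaseSet, mem_filter, mem_univ, true_and,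
    Fin.val_cast_of_lt (show 2 * k + 2 < 2 * ℓ + 1 by omega)]
  congr 1
  simp only [eq_iff_iff]
  omega

theorem staircase_mem_stabFaceZero (ℓ j : ℕ) : staircase ℓ j ∈ stabFaceZero ℓ := by
  refine ⟨staircase_mem_stabPolytope ℓ j, staircase_zero ℓ j, ?_⟩
  have hpair :
      ∀ k ∈ range ℓ, staircase ℓ j (2 * k + 1 : ℕ) + staircase ℓ j (2 * k + 2 : ℕ) = 1 := by
    intro k hk
    rw [staircase_odd ℓ j (mem_range.mp hk), staircase_even ℓ j (mem_range.mp hk)]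
    split_ifs <;> first | omega | norm_num
  rw [Fin.sum_univ_two_mul_add_one, staircase_zero, zero_add, sum_congr rfl hpair]
  simp

def oddCoords (ℓ : ℕ) : (Fin (2 * ℓ + 1) → ℝ) →ₗ[ℝ] (Fin ℓ → ℝ) :=
  LinearMap.funLeft ℝ ℝ fun k : Fin ℓ => ((2 * k + 1 : ℕ) : Fin (2 * ℓ + 1))

theorem oddCoords_staircase_succ_sub (ℓ : ℕ) (k : Fin ℓ) :
    oddCoords ℓ (staircase ℓ (k + 1) - staircase ℓ k) = Pi.single k 1 := by
  ext m
  simp only [oddCoords, LinearMap.funLeft_apply, Pi.sub_apply, staircase_odd ℓ _ m.isLt,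
    Pi.single_apply, Fin.ext_iff]
  split_ifs <;> first | omega | norm_num

theorem map_oddCoords_vectorSpan_stabFaceZero (ℓ : ℕ) :
    (vectorSpan ℝ (stabFaceZero ℓ)).map (oddCoords ℓ) = ⊤ := by
  rw [eq_top_iff, ← (Pi.basisFun ℝ (Fin ℓ)).span_eq, Submodule.span_le]
  rintro _ ⟨k, rfl⟩
  refine ⟨staircase ℓ (k + 1) - staircase ℓ k, ?_, ?_⟩
  · exact vsub_mem_vectorSpan ℝ (staircase_mem_stabFaceZero ℓ _) (staircase_mem_stabFaceZero ℓ _)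
  · rw [Pi.basisFun_apply, oddCoords_staircase_succ_sub]

theorem injective_oddCoords_domRestrict_vectorSpan_stabFaceZero (ℓ : ℕ) :
    Function.Injective ((oddCoords ℓ).domRestrict (vectorSpan ℝ (stabFaceZero ℓ))) := by
  rw [← LinearMap.ker_eq_bot, LinearMap.ker_eq_bot']
  rintro ⟨g, hg⟩ hodd
  have hodd' : ∀ k < ℓ, g (2 * k + 1 : ℕ) = 0 := fun k hk => congrFun hodd ⟨k, hk⟩
  let ev (i : Fin (2 * ℓ + 1)) : (Fin (2 * ℓ + 1) → ℝ) →ₗ[ℝ] ℝ := LinearMap.proj i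
  have hzero : g 0 = 0 :=
    vectorSpan_le_ker_of_forall_eq (ev 0) 0 (fun f hf => hf.2.1) hg
  have hpair : ∀ k < ℓ, g (2 * k + 1 : ℕ) + g (2 * k + 2 : ℕ) = 0 := fun k hk =>
    vectorSpan_le_ker_of_forall_eq (ev (2 * k + 1 : ℕ) + ev (2 * k + 2 : ℕ)) 1
      (fun _ hf => add_eq_one_of_mem_stabFaceZero hf hk) hg
  suffices ∀ i, g i = 0 from Subtype.ext (funext this)
  intro i
  rcases Fin.eq_zero_or_exists_two_mul_add i with rfl | ⟨k, hk, rfl | rfl⟩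
  · exact hzero
  · exact hodd' k hk
  · linarith [hpair k hk, hodd' k hk]

theorem stmt_4 (ℓ : ℕ) :
    Module.finrank ℝ
      (vectorSpan ℝ
        { f ∈ stabPolytope (2 * ℓ + 1) | f 0 = 0 ∧ ∑ i, f i = (ℓ : ℝ) }) = ℓ := by
  have hsurj :
      Function.Surjective ((oddCoords ℓ).domRestrict (vectorSpan ℝ (stabFaceZero ℓ))) := by
    rw [← LinearMap.range_eq_top, LinearMap.range_domRestrict]
    exact map_oddCoords_vectorSpan_stabFaceZero ℓ
  exact (LinearEquiv.ofBijective _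
    ⟨injective_oddCoords_domRestrict_vectorSpan_stabFaceZero ℓ, hsurj⟩).finrank_eq.trans
    (Module.finrank_fin_fun ℝ)
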